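/- arXiv:1708.04651 — 2 statements merged into one kernel-verified Lean document; each statement's English description precedes it below -/
import Mathlib

section
/- Let η_p(y) = (a₂₀ + 2a₁₁ y + a₀₂ y², b₂₀ + 2b₁₁ y + b₀₂ y²). If a₁₁b₀₂ − a₀₂b₁₁ = 0 and a₀₂² + b₀₂² > 0, then the image of η_p is contained in a line in ℝ², and moreover η_p is not injective on all of ℝ (the image is a half-line: the curve doubles back). -/
/-- Degenerate case: if `a₁₁b₀₂ − a₀₂b₁₁ = 0` and `a₀₂² + b₀₂² > 0`, the
curvature parabola lies on a line and the parametrisation is not injective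
(the image is a half-line). -/
theorem stmt4 (a20 a11 a02 b20 b11 b02 : ℝ)
    (h1 : a11 * b02 - a02 * b11 = 0) (h2 : a02 ^ 2 + b02 ^ 2 > 0)
    (ηp : ℝ → ℝ × ℝ)
    (hp : ∀ y, ηp y = (a20 + 2 * a11 * y + a02 * y ^ 2,
                       b20 + 2 * b11 * y + b02 * y ^ 2)) :
    (∃ α β γ : ℝ, (α, β) ≠ (0, 0) ∧
        ∀ y : ℝ, α * (ηp y).1 + β * (ηp y).2 + γ = 0) ∧
    ¬ Function.Injective ηp := by
  have hab : a02 ≠ 0 ∨ b02 ≠ 0 := by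
    by_contra h
    push_neg at h
    simp [h.1, h.2] at h2
  constructor
  · refine ⟨b02, -a02, a02 * b20 - b02 * a20, ?_, ?_⟩
    · intro h
      rcases hab with h' | h' <;> simp [Prod.ext_iff] at h <;> exact absurd h.2 (by tauto)
    · intro y
      rw [hp y]
      simp only
      linear_combination 2 * y * h1
  · intro hinj
    rcases hab with ha | hb
    · have key : ηp (-a11 / a02 + 1) = ηp (-a11 / a02 - 1) := by
        rw [hp, hp]
        have hb11 : b11 = a11 * b02 / a02 := by field_simp; linarith
        subst hb11
        refine Prod.ext ?_ ?_ <;> field_simp <;> ring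
      have := hinj key
      have : (1 : ℝ) = -1 := by linarith
      norm_num at this
    · have key : ηp (-b11 / b02 + 1) = ηp (-b11 / b02 - 1) := by
        rw [hp, hp]
        have ha11 : a11 = a02 * b11 / b02 := by field_simp; linarith
        subst ha11
        refine Prod.ext ?_ ?_ <;> field_simp <;> ring
      have := hinj key
      have : (1 : ℝ) = -1 := by linarith
      norm_num at this
end

section
/- Let η_p(y) = (a₂₀ + 2a₁₁y + a₀₂y², b₂₀ + 2b₁₁y + b₀₂y²) with a₁₁b₀₂ − a₀₂b₁₁ ≠ 0 (non-degenerate parabola). Then det(η_p(y), η_p'(y)) = 2[(a₂₀b₁₁−a₁₁b₂₀) + (a₂₀b₀₂−a₀₂b₂₀)y + (a₁₁b₀₂−a₀₂b₁₁)y²]. Hence the y ∈ ℝ for which η_p(y) and η_p'(y) are linearly dependent (asymptotic directions) are exactly the real roots of the quadratic (a₁₁b₀₂−a₀₂b₁₁)y² + (a₂₀b₀₂−a₀₂b₂₀)y + (a₂₀b₁₁−a₁₁b₂₀) = 0, and their number is 0, 1, or 2. -/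
lemma dep_iff (u v : ℝ × ℝ) :
    ¬ LinearIndependent ℝ ![u, v] ↔ u.1 * v.2 - u.2 * v.1 = 0 := by
  rw [LinearIndependent.pair_iff]
  constructor
  · intro h
    by_contra hd
    apply h
    intro s t hst
    have h1 : s * u.1 + t * v.1 = 0 := congrArg Prod.fst hst
    have h2 : s * u.2 + t * v.2 = 0 := congrArg Prod.snd hst
    constructor
    · have : s * (u.1 * v.2 - u.2 * v.1) = 0 := by linear_combination v.2 * h1 - v.1 * h2
      exact (mul_eq_zero.1 this).resolve_right hd
    · have : t * (u.1 * v.2 - u.2 * v.1) = 0 := by linear_combination u.1 * h2 - u.2 * h1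
      exact (mul_eq_zero.1 this).resolve_right hd
  · intro hd h
    by_cases h2 : u.2 = 0 ∧ v.2 = 0
    · by_cases h1 : u.1 = 0 ∧ v.1 = 0
      · have := (h 1 0 (by
          have : u = 0 := Prod.ext h1.1 h2.1
          simp [this])).1
        norm_num at this
      · rcases not_and_or.1 h1 with h1' | h1'
        · have := (h v.1 (-u.1) (by
            apply Prod.ext <;> simp <;> nlinarith [hd])).2
          simp at this
          exact h1' this
        · have := (h v.1 (-u.1) (by
            apply Prod.ext <;> simp <;> nlinarith [hd])).1
          exact h1' this
    · rcases not_and_or.1 h2 with h2' | h2'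
      · have := (h v.2 (-u.2) (by
          apply Prod.ext <;> simp <;> nlinarith [hd])).2
        simp at this
        exact h2' this
      · have := (h v.2 (-u.2) (by
          apply Prod.ext <;> simp <;> nlinarith [hd])).1
        exact h2' this

lemma deriv_eta (a20 a11 a02 b20 b11 b02 : ℝ) (ηp : ℝ → ℝ × ℝ)
    (hp : ∀ y, ηp y = (a20 + 2 * a11 * y + a02 * y ^ 2,
                       b20 + 2 * b11 * y + b02 * y ^ 2)) (y : ℝ) :
    deriv ηp y = (2 * a11 + a02 * (2 * y), 2 * b11 + b02 * (2 * y)) := by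
  have hη : ηp = fun y => ((a20 + 2 * a11 * y + a02 * y ^ 2,
      b20 + 2 * b11 * y + b02 * y ^ 2) : ℝ × ℝ) := funext hp
  have h1 : HasDerivAt (fun y : ℝ => a20 + 2 * a11 * y + a02 * y ^ 2)
      (2 * a11 + a02 * (2 * y)) y := by
    have := ((hasDerivAt_const y a20).add
      ((hasDerivAt_id y).const_mul (2 * a11))).add ((hasDerivAt_pow 2 y).const_mul a02)
    refine this.congr_deriv ?_
    norm_num
  have h2 : HasDerivAt (fun y : ℝ => b20 + 2 * b11 * y + b02 * y ^ 2)
      (2 * b11 + b02 * (2 * y)) y := by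
    have := ((hasDerivAt_const y b20).add
      ((hasDerivAt_id y).const_mul (2 * b11))).add ((hasDerivAt_pow 2 y).const_mul b02)
    refine this.congr_deriv ?_
    norm_num
  rw [hη]
  exact (h1.prodMk h2).deriv


/-- For a non-degenerate curvature parabola, `det(η_p(y), η_p'(y)) =
2[(a₂₀b₁₁−a₁₁b₂₀) + (a₂₀b₀₂−a₀₂b₂₀)y + (a₁₁b₀₂−a₀₂b₁₁)y²]`; the asymptotic
directions are the real roots of this quadratic, of which there are at most 2. -/
theorem stmt17 (a20 a11 a02 b20 b11 b02 : ℝ)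
    (hC : a11 * b02 - a02 * b11 ≠ 0)
    (ηp : ℝ → ℝ × ℝ)
    (hp : ∀ y, ηp y = (a20 + 2 * a11 * y + a02 * y ^ 2,
                       b20 + 2 * b11 * y + b02 * y ^ 2)) :
    (∀ y : ℝ, (ηp y).1 * (deriv ηp y).2 - (ηp y).2 * (deriv ηp y).1 =
      2 * ((a20 * b11 - a11 * b20) + (a20 * b02 - a02 * b20) * y
        + (a11 * b02 - a02 * b11) * y ^ 2)) ∧
    (∀ y : ℝ, ¬ LinearIndependent ℝ ![ηp y, deriv ηp y] ↔
      (a11 * b02 - a02 * b11) * y ^ 2 + (a20 * b02 - a02 * b20) * y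
        + (a20 * b11 - a11 * b20) = 0) ∧
    (∃ s : Finset ℝ, s.card ≤ 2 ∧
      {y : ℝ | (a11 * b02 - a02 * b11) * y ^ 2 + (a20 * b02 - a02 * b20) * y
        + (a20 * b11 - a11 * b20) = 0} ⊆ ↑s) := by
  have hdet : ∀ y : ℝ, (ηp y).1 * (deriv ηp y).2 - (ηp y).2 * (deriv ηp y).1 =
      2 * ((a20 * b11 - a11 * b20) + (a20 * b02 - a02 * b20) * y
        + (a11 * b02 - a02 * b11) * y ^ 2) := by
    intro y
    rw [hp y, deriv_eta a20 a11 a02 b20 b11 b02 ηp hp y]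
    ring
  refine ⟨hdet, fun y => ?_, ?_⟩
  · rw [dep_iff, hdet y]
    constructor
    · intro h
      nlinarith [h]
    · intro h
      nlinarith [h]
  · set p : Polynomial ℝ := Polynomial.C (a11 * b02 - a02 * b11) * Polynomial.X ^ 2 +
      Polynomial.C (a20 * b02 - a02 * b20) * Polynomial.X +
      Polynomial.C (a20 * b11 - a11 * b20) with hpdef
    have hdeg : p.natDegree = 2 := Polynomial.natDegree_quadratic hC
    have hp0 : p ≠ 0 := fun h => by simp [h] at hdeg
    refine ⟨p.roots.toFinset, ?_, ?_⟩
    · calc p.roots.toFinset.card ≤ Multiset.card p.roots := p.roots.toFinset_card_le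
        _ ≤ p.natDegree := p.card_roots'
        _ = 2 := hdeg
    · intro y hy
      simp only [Set.mem_setOf_eq] at hy
      simp only [Finset.coe_sort_coe, Multiset.mem_toFinset, Finset.mem_coe]
      rw [Polynomial.mem_roots hp0]
      simp [hpdef, Polynomial.IsRoot, hy]
end
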